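/- Let d ≥ 1, let K ⊂ ℝ^d be a compact convex set containing at least two points, and let σ : ℝ → ℝ be continuous and piecewise polynomial with finitely many pieces. Let (r_k)_{k≥1} and (n_k)_{k≥1} be arbitrary sequences of natural numbers and let (ε_k)_{k≥1} be a sequence of real numbers with ε_k → 0. Then there exists a continuous function f : K → ℝ such that for every k ≥ 1, inf_{g ∈ τ_{r_k, n_k}^{σ,d}} sup_{x ∈ K} |f(x) − g(x)| ≥ ε_k. -/

import Mathlib

open MeasureTheory

/-- `Hidden σ d n s` is the set of tuples of hidden-unit functions `h^{(s+1)} = (h_1, …, h_n)` of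
the `(s+1)`-st hidden layer of a feedforward network with input dimension `d`, `n` units in each
hidden layer and activation `σ`:  `h^{(1)}_i(x) = σ(w^i · x + b_i)` and
`h^{(ℓ+1)}_i(x) = σ(∑_j a_{ij} h^{(ℓ)}_j(x) + β_i)`. -/
def Hidden (σ : ℝ → ℝ) (d n : ℕ) : ℕ → Set ((Fin d → ℝ) → Fin n → ℝ)
  | 0 => { h | ∃ (w : Fin n → Fin d → ℝ) (b : Fin n → ℝ),
      h = fun x i => σ ((∑ j, w i j * x j) + b i) }
  | s + 1 => { h | ∃ g ∈ Hidden σ d n s, ∃ (a : Fin n → Fin n → ℝ) (β : Fin n → ℝ),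
      h = fun x i => σ ((∑ j, a i j * g x j) + β i) }

/-- `Tau σ r n d` is the set `τ_{r,n}^{σ,d}` of functions `ℝ^d → ℝ` computed by a feedforward
neural network with activation `σ`, at most `r` hidden layers and `n` units in each hidden
layer: `x ↦ ∑_i c_i h^{(s)}_i(x)` for some `1 ≤ s ≤ r`. -/
def Tau (σ : ℝ → ℝ) (r n d : ℕ) : Set ((Fin d → ℝ) → ℝ) :=
  { f | ∃ s : ℕ, s < r ∧ ∃ h ∈ Hidden σ d n s, ∃ c : Fin n → ℝ,
      f = fun x => ∑ i, c i * h x i }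

/-- `σ : ℝ → ℝ` is piecewise polynomial with finitely many pieces: there are breakpoints
`t 0 < t 1 < … < t (m-1)` and polynomials `p 0, …, p m` such that `σ` agrees with `p j` on the
`j`-th open piece (i.e. on `{x | t i < x for i < j, and x < t i for j ≤ i}`). -/
def IsPiecewisePoly (σ : ℝ → ℝ) : Prop :=
  ∃ (m : ℕ) (t : Fin m → ℝ), StrictMono t ∧
    ∃ p : Fin (m + 1) → Polynomial ℝ,
      ∀ j : Fin (m + 1), ∀ x : ℝ,
        (∀ i : Fin m, ((i : ℕ) < (j : ℕ) → t i < x) ∧ ((j : ℕ) ≤ (i : ℕ) → x < t i)) →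
        σ x = (p j).eval x


open Polynomial Filter Set

/-- Auxiliary notion: `g` is piecewise polynomial with at most `N` breakpoints and degree `≤ D`,
in the local sense. -/
def PwPoly (g : ℝ → ℝ) (N D : ℕ) : Prop :=
  ∃ s : Finset ℝ, s.card ≤ N ∧ ∀ x : ℝ, x ∉ s →
    ∃ p : Polynomial ℝ, p.natDegree ≤ D ∧ ∀ᶠ y in nhds x, g y = p.eval y

lemma PwPoly.mono {g : ℝ → ℝ} {N D N' D' : ℕ} (h : PwPoly g N D) (hN : N ≤ N') (hD : D ≤ D') :
    PwPoly g N' D' := by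
  obtain ⟨s, hs, hloc⟩ := h
  exact ⟨s, hs.trans hN, fun x hx => by
    obtain ⟨p, hp, he⟩ := hloc x hx
    exact ⟨p, hp.trans hD, he⟩⟩

lemma PwPoly.neg {g : ℝ → ℝ} {N D : ℕ} (h : PwPoly g N D) : PwPoly (fun x => -(g x)) N D := by
  obtain ⟨s, hs, hloc⟩ := h
  refine ⟨s, hs, fun x hx => ?_⟩
  obtain ⟨p, hp, he⟩ := hloc x hx
  exact ⟨-p, by simpa using hp, he.mono fun y hy => by simp [hy]⟩

lemma fatten (s : Finset ℝ) {a b : ℝ} (hs : ∀ x ∈ Set.Icc a b, x ∉ s) :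
    ∃ a' b', a' < a ∧ b < b' ∧ ∀ x ∈ Set.Ioo a' b', x ∉ s := by
  classical
  set sl := s.filter (fun w => w < a) with hsl
  set sr := s.filter (fun w => b < w) with hsr
  refine ⟨if h : sl.Nonempty then (sl.max' h + a) / 2 else a - 1,
          if h : sr.Nonempty then (sr.min' h + b) / 2 else b + 1, ?_, ?_, ?_⟩
  · split_ifs with h
    · have := Finset.mem_filter.mp (sl.max'_mem h) |>.2
      linarith
    · linarith
  · split_ifs with h
    · have := Finset.mem_filter.mp (sr.min'_mem h) |>.2
      linarith
    · linarith
  · rintro x ⟨hx1, hx2⟩ hxs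
    rcases lt_or_ge x a with h | h
    · have hmem : x ∈ sl := Finset.mem_filter.mpr ⟨hxs, h⟩
      have hne : sl.Nonempty := ⟨x, hmem⟩
      rw [dif_pos hne] at hx1
      have h1 : x ≤ sl.max' hne := Finset.le_max' _ _ hmem
      have h2 : sl.max' hne < a := (Finset.mem_filter.mp (sl.max'_mem hne)).2
      linarith
    · rcases le_or_gt x b with h' | h'
      · exact hs x ⟨h, h'⟩ hxs
      · have hmem : x ∈ sr := Finset.mem_filter.mpr ⟨hxs, h'⟩
        have hne : sr.Nonempty := ⟨x, hmem⟩
        rw [dif_pos hne] at hx2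
        have h1 : sr.min' hne ≤ x := Finset.min'_le _ _ hmem
        have h2 : b < sr.min' hne := (Finset.mem_filter.mp (sr.min'_mem hne)).2
        linarith

/-- Gluing: a locally-polynomial function is a single polynomial on an open preconnected set
avoiding the breakpoints. -/
lemma glue {g : ℝ → ℝ} {s : Finset ℝ} {D : ℕ}
    (h : ∀ x : ℝ, x ∉ s → ∃ p : Polynomial ℝ, p.natDegree ≤ D ∧ ∀ᶠ y in nhds x, g y = p.eval y)
    {U : Set ℝ} (hU : IsOpen U) (hUc : IsPreconnected U) (hUs : ∀ x ∈ U, x ∉ s) :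
    ∃ p : Polynomial ℝ, p.natDegree ≤ D ∧ ∀ x ∈ U, g x = p.eval x := by
  rcases U.eq_empty_or_nonempty with rfl | ⟨x0, hx0⟩
  · exact ⟨0, by simp, by simp⟩
  obtain ⟨p0, hp0, he0⟩ := h x0 (hUs x0 hx0)
  have huniq : ∀ (p q : Polynomial ℝ) (x : ℝ), (∀ᶠ y in nhds x, g y = p.eval y) →
      (∀ᶠ y in nhds x, g y = q.eval y) → p = q := by
    intro p q x hp hq
    have h1 : ∀ᶠ y in nhds x, (p - q).eval y = 0 := by
      filter_upwards [hp, hq] with y h1 h2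
      simp only [eval_sub]
      rw [← h1, ← h2, sub_self]
    obtain ⟨r, hr, hball⟩ := Metric.eventually_nhds_iff.mp h1
    have hsub : Set.Ioo (x - r) (x + r) ⊆ {y | (p - q).IsRoot y} := by
      intro y hy
      have : dist y x < r := by
        rw [Real.dist_eq, abs_lt]
        constructor <;> [linarith [hy.1]; linarith [hy.2]]
      exact hball this
    have hinf : {y | (p - q).IsRoot y}.Infinite :=
      (Set.Ioo_infinite (by linarith)).mono hsub
    exact sub_eq_zero.mp (Polynomial.eq_zero_of_infinite_isRoot _ hinf)
  set A : Set ℝ := {x | ∀ᶠ y in nhds x, g y = p0.eval y} with hA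
  set B : Set ℝ := ⋃ (p : Polynomial ℝ) (_ : p ≠ p0), {x | ∀ᶠ y in nhds x, g y = p.eval y} with hB
  have hAo : IsOpen A := by
    have : A = {x | ∀ᶠ y in nhds x, ∀ᶠ z in nhds y, g z = p0.eval z} := by
      ext x
      constructor
      · intro hx
        exact hx.eventually_nhds
      · intro hx
        exact (hx.self_of_nhds)
    rw [this]
    exact isOpen_setOf_eventually_nhds
  have hBo : IsOpen B := by
    refine isOpen_iUnion fun p => isOpen_iUnion fun _ => ?_
    have : {x : ℝ | ∀ᶠ y in nhds x, g y = p.eval y}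
        = {x | ∀ᶠ y in nhds x, ∀ᶠ z in nhds y, g z = p.eval z} := by
      ext x
      exact ⟨fun hx => hx.eventually_nhds, fun hx => hx.self_of_nhds⟩
    rw [this]
    exact isOpen_setOf_eventually_nhds
  have hdisj : Disjoint A B := by
    rw [Set.disjoint_left]
    intro x hxA hxB
    simp only [hB, Set.mem_iUnion] at hxB
    obtain ⟨p, hp, hxp⟩ := hxB
    exact hp (huniq p p0 x hxp hxA)
  have hcover : U ⊆ A ∪ B := by
    intro x hx
    obtain ⟨p, _, hep⟩ := h x (hUs x hx)
    by_cases hpp : p = p0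
    · exact Or.inl (by simp only [hA, Set.mem_setOf_eq]; rw [← hpp]; exact hep)
    · exact Or.inr (Set.mem_iUnion.mpr ⟨p, Set.mem_iUnion.mpr ⟨hpp, hep⟩⟩)
  rcases hUc.subset_or_subset hAo hBo hdisj hcover with hUA | hUB
  · exact ⟨p0, hp0, fun x hx => (hUA hx).self_of_nhds⟩
  · exact absurd (hUB hx0) (Set.disjoint_left.mp hdisj he0)

/-- Counting lemma: if `B` meets every `s`-free closed interval in at most `c` points,
then `B` has at most `(s.card + 1) * c` points. -/
lemma count_lemma {B : Set ℝ} {s : Finset ℝ} {c : ℕ}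
    (hBs : ∀ x ∈ B, x ∉ s)
    (h : ∀ a b : ℝ, a ≤ b → (∀ x ∈ Set.Icc a b, x ∉ s) →
      (B ∩ Set.Icc a b).Finite ∧ (B ∩ Set.Icc a b).ncard ≤ c) :
    B.Finite ∧ B.ncard ≤ (s.card + 1) * c := by
  classical
  set φ : ℝ → ℕ := fun x => (s.filter (fun w => w < x)).card with hφ
  have hkey : ∀ x y : ℝ, x ∈ B → y ∈ B → x ≤ y → φ x = φ y →
      (B ∩ Set.Icc x y).Finite ∧ (B ∩ Set.Icc x y).ncard ≤ c := by
    intro x y hx hy hxy hφeq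
    refine h x y hxy fun w hw hws => ?_
    have hwx : x ≠ w := fun e => hBs x hx (e ▸ hws)
    have hwy : w ≠ y := fun e => hBs y hy (e ▸ hws)
    have h1 : x < w := lt_of_le_of_ne hw.1 hwx
    have h2 : w < y := lt_of_le_of_ne hw.2 hwy
    have hss : s.filter (fun w => w < x) ⊂ s.filter (fun w => w < y) := by
      refine Finset.ssubset_iff_of_subset (fun z hz => ?_) |>.mpr ?_
      · obtain ⟨hz1, hz2⟩ := Finset.mem_filter.mp hz
        exact Finset.mem_filter.mpr ⟨hz1, lt_trans hz2 (lt_of_lt_of_le h1 hw.2)⟩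
      exact ⟨w, Finset.mem_filter.mpr ⟨hws, h2⟩, fun hc => absurd (Finset.mem_filter.mp hc).2 (not_lt.mpr h1.le)⟩
    exact absurd hφeq (ne_of_lt (Finset.card_lt_card hss))
  have hfib : ∀ j : ℕ, ({x ∈ B | φ x = j}).Finite ∧ ({x ∈ B | φ x = j}).ncard ≤ c := by
    intro j
    set Bj := {x ∈ B | φ x = j} with hBj
    have hsubIcc : ∀ (T : Finset ℝ), ↑T ⊆ Bj → T.card ≤ c := by
      intro T hT
      rcases T.eq_empty_or_nonempty with rfl | hTne
      · simp
      have hmin : T.min' hTne ∈ Bj := hT (T.min'_mem hTne)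
      have hmax : T.max' hTne ∈ Bj := hT (T.max'_mem hTne)
      obtain ⟨hfin, hcard⟩ := hkey _ _ hmin.1 hmax.1 (T.min'_le _ (T.max'_mem hTne))
        (hmin.2.trans hmax.2.symm)
      have hsub : (↑T : Set ℝ) ⊆ B ∩ Set.Icc (T.min' hTne) (T.max' hTne) := by
        intro z hz
        exact ⟨(hT hz).1, T.min'_le _ hz, T.le_max' _ hz⟩
      calc T.card = (↑T : Set ℝ).ncard := (Set.ncard_coe_finset T).symm
        _ ≤ (B ∩ Set.Icc (T.min' hTne) (T.max' hTne)).ncard := Set.ncard_le_ncard hsub hfin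
        _ ≤ c := hcard
    have hfinj : Bj.Finite := by
      by_contra hinf
      obtain ⟨T, hT, hTc⟩ := Set.Infinite.exists_subset_card_eq hinf (c + 1)
      exact absurd (hsubIcc T hT) (by omega)
    refine ⟨hfinj, ?_⟩
    have := hsubIcc hfinj.toFinset (by simp)
    rwa [Set.ncard_eq_toFinset_card Bj hfinj]
  have hcov : B ⊆ ⋃ j ∈ Finset.range (s.card + 1), {x ∈ B | φ x = j} := by
    intro x hx
    have : φ x ≤ s.card := Finset.card_le_card (Finset.filter_subset _ _)
    exact Set.mem_biUnion (Finset.mem_coe.mpr (Finset.mem_range.mpr (by omega))) ⟨hx, rfl⟩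
  have hfinB : B.Finite := Set.Finite.subset
    ((Finset.range (s.card + 1)).finite_toSet.biUnion fun j _ => (hfib j).1) hcov
  refine ⟨hfinB, ?_⟩
  rw [Set.ncard_eq_toFinset_card B hfinB]
  have hsubF : hfinB.toFinset ⊆ (Finset.range (s.card + 1)).biUnion
      (fun j => ((hfib j).1).toFinset) := by
    intro x hx
    have hxB : x ∈ B := by simpa using hx
    have : φ x ≤ s.card := Finset.card_le_card (Finset.filter_subset _ _)
    refine Finset.mem_biUnion.mpr ⟨φ x, by simp; omega, ?_⟩
    simp [hxB]
  calc hfinB.toFinset.card ≤ _ := Finset.card_le_card hsubF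
    _ ≤ ∑ j ∈ Finset.range (s.card + 1), ((hfib j).1).toFinset.card := Finset.card_biUnion_le
    _ ≤ (s.card + 1) * c := by
        have := Finset.sum_le_card_nsmul (Finset.range (s.card + 1))
          (fun j => ((hfib j).1).toFinset.card) c (fun j _ => by
            have := (hfib j).2
            rwa [Set.ncard_eq_toFinset_card _ ((hfib j).1)] at this)
        simpa using this

section Sigma

variable {σ : ℝ → ℝ} {m : ℕ} {t : Fin m → ℝ} {pσ : Fin (m + 1) → Polynomial ℝ} {E : ℕ}

/-- From the piecewise-polynomial structure: near any non-breakpoint, `σ` agrees with one piece. -/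
lemma sigma_local (ht : StrictMono t)
    (hp : ∀ j : Fin (m + 1), ∀ x : ℝ,
      (∀ i : Fin m, ((i : ℕ) < (j : ℕ) → t i < x) ∧ ((j : ℕ) ≤ (i : ℕ) → x < t i)) →
      σ x = (pσ j).eval x) :
    ∀ v : ℝ, (∀ i, t i ≠ v) → ∃ j : Fin (m + 1), ∀ᶠ z in nhds v, σ z = (pσ j).eval z := by
  classical
  intro v hv
  set jc : ℕ := (Finset.univ.filter (fun i : Fin m => t i < v)).card with hjc
  have hjle : jc ≤ m := by
    have := Finset.card_le_card (Finset.filter_subset (fun i : Fin m => t i < v) Finset.univ)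
    simpa using this
  have hlt : ∀ i : Fin m, (i : ℕ) < jc → t i < v := by
    intro i hi
    by_contra hc
    have hvi : v < t i := lt_of_le_of_ne (not_lt.mp hc) (hv i).symm
    have hsub : Finset.univ.filter (fun i' : Fin m => t i' < v) ⊆
        Finset.univ.filter (fun i' : Fin m => (i' : ℕ) < (i : ℕ)) := by
      intro i' hi'
      have h1 : t i' < v := (Finset.mem_filter.mp hi').2
      have : t i' < t i := lt_trans h1 hvi
      exact Finset.mem_filter.mpr ⟨Finset.mem_univ _, by exact_mod_cast ht.lt_iff_lt.mp this⟩
    have hcard : jc ≤ (Finset.univ.filter (fun i' : Fin m => (i' : ℕ) < (i : ℕ))).card :=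
      Finset.card_le_card hsub
    have hle : (Finset.univ.filter (fun i' : Fin m => (i' : ℕ) < (i : ℕ))).card ≤ (i : ℕ) := by
      have hinj : Set.InjOn (fun i' : Fin m => (i' : ℕ))
          ↑(Finset.univ.filter (fun i' : Fin m => (i' : ℕ) < (i : ℕ))) := fun a _ b _ h => Fin.ext h
      have := Finset.card_le_card_of_injOn (fun i' : Fin m => (i' : ℕ))
        (fun a ha => Finset.mem_range.mpr (Finset.mem_filter.mp ha).2) hinj
      simpa using this
    omega
  have hgt : ∀ i : Fin m, jc ≤ (i : ℕ) → v < t i := by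
    intro i hi
    by_contra hc
    have hvi : t i < v := lt_of_le_of_ne (not_lt.mp hc) (hv i)
    have hsub : Finset.range ((i : ℕ) + 1) ⊆
        (Finset.univ.filter (fun i' : Fin m => t i' < v)).image (fun i' : Fin m => (i' : ℕ)) := by
      intro a ha
      have ha' : a ≤ (i : ℕ) := by
        have := Finset.mem_range.mp ha; omega
      have ham : a < m := lt_of_le_of_lt ha' i.isLt
      refine Finset.mem_image.mpr ⟨⟨a, ham⟩, Finset.mem_filter.mpr ⟨Finset.mem_univ _, ?_⟩, rfl⟩
      have : t ⟨a, ham⟩ ≤ t i := ht.le_iff_le.mpr (by exact_mod_cast ha')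
      exact lt_of_le_of_lt this hvi
    have := Finset.card_le_card hsub
    rw [Finset.card_range] at this
    have hcard : ((Finset.univ.filter (fun i' : Fin m => t i' < v)).image
        (fun i' : Fin m => (i' : ℕ))).card ≤ jc := Finset.card_image_le
    omega
  refine ⟨⟨jc, by omega⟩, ?_⟩
  have hev : ∀ᶠ z in nhds v, ∀ i : Fin m,
      (((i : ℕ) < jc → t i < z) ∧ (jc ≤ (i : ℕ) → z < t i)) := by
    rw [eventually_all]
    intro i
    rcases lt_or_ge (i : ℕ) jc with hi | hi
    · filter_upwards [lt_mem_nhds (hlt i hi)] with z hz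
      exact ⟨fun _ => hz, fun hc => absurd hc (by omega)⟩
    · filter_upwards [gt_mem_nhds (hgt i hi)] with z hz
      exact ⟨fun hc => absurd hc (by omega), fun _ => hz⟩
  filter_upwards [hev] with z hz
  exact hp ⟨jc, by omega⟩ z hz

/-- Base case: `σ` composed with an affine map is piecewise polynomial. -/
lemma PwPoly_base (ht : StrictMono t)
    (hσloc : ∀ v : ℝ, (∀ i, t i ≠ v) → ∃ j : Fin (m + 1), ∀ᶠ z in nhds v, σ z = (pσ j).eval z)
    (hE : ∀ j, (pσ j).natDegree ≤ E) (c e : ℝ) :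
    PwPoly (fun τ => σ (c * τ + e)) m E := by
  classical
  by_cases hc : c = 0
  · refine ⟨∅, by simp, fun x _ => ⟨Polynomial.C (σ e), by simp, ?_⟩⟩
    subst hc
    filter_upwards with y
    simp
  · refine ⟨Finset.univ.image (fun i : Fin m => (t i - e) / c), le_trans Finset.card_image_le (by simp), fun x hx => ?_⟩
    have hne : ∀ i, t i ≠ c * x + e := by
      intro i hcon
      exact hx (Finset.mem_image.mpr ⟨i, Finset.mem_univ _, by field_simp [hcon]; linarith⟩)
    obtain ⟨j, hj⟩ := hσloc (c * x + e) hne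
    refine ⟨(pσ j).comp (Polynomial.C c * Polynomial.X + Polynomial.C e), ?_, ?_⟩
    · calc ((pσ j).comp _).natDegree ≤ (pσ j).natDegree * (Polynomial.C c * Polynomial.X + Polynomial.C e).natDegree :=
        Polynomial.natDegree_comp_le
      _ ≤ E * 1 := Nat.mul_le_mul (hE j) Polynomial.natDegree_linear_le
      _ = E := by ring
    · have htend : Filter.Tendsto (fun y : ℝ => c * y + e) (nhds x) (nhds (c * x + e)) :=
        (((continuous_const.mul continuous_id).add continuous_const).continuousAt)
      filter_upwards [htend.eventually hj] with y hy
      simpa [Polynomial.eval_comp] using hy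
  end Sigma

/-- Linear combinations. -/
lemma PwPoly_sum {q : ℕ} {c : Fin q → ℝ} {G : Fin q → ℝ → ℝ} {N D : ℕ}
    (h : ∀ i, PwPoly (G i) N D) :
    PwPoly (fun τ => ∑ i, c i * G i τ) (q * N) D := by
  classical
  choose s hcard hloc using h
  refine ⟨Finset.univ.biUnion s, ?_, fun x hx => ?_⟩
  · calc (Finset.univ.biUnion s).card ≤ ∑ i, (s i).card := Finset.card_biUnion_le
      _ ≤ Finset.univ.card • N := Finset.sum_le_card_nsmul _ _ _ (fun i _ => hcard i)
      _ = q * N := by simp [Finset.card_univ]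
  · have hxi : ∀ i, x ∉ s i := fun i hxi => hx (Finset.mem_biUnion.mpr ⟨i, Finset.mem_univ _, hxi⟩)
    choose p hdeg hev using fun i => hloc i x (hxi i)
    refine ⟨∑ i, Polynomial.C (c i) * p i, ?_, ?_⟩
    · exact Polynomial.natDegree_sum_le_of_forall_le _ _ fun i _ =>
        le_trans (Polynomial.natDegree_C_mul_le _ _) (hdeg i)
    · have : ∀ᶠ y in nhds x, ∀ i, G i y = (p i).eval y := eventually_all.mpr hev
      filter_upwards [this] with y hy
      simp only [Polynomial.eval_finset_sum, Polynomial.eval_mul, Polynomial.eval_C]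
      exact Finset.sum_congr rfl fun i _ => by rw [hy i]

/-- Adding a constant. -/
lemma PwPoly_add_const {G : ℝ → ℝ} {N D : ℕ} (h : PwPoly G N D) (β : ℝ) :
    PwPoly (fun τ => G τ + β) N D := by
  obtain ⟨s, hs, hloc⟩ := h
  refine ⟨s, hs, fun x hx => ?_⟩
  obtain ⟨p, hdeg, hev⟩ := hloc x hx
  refine ⟨p + Polynomial.C β, le_trans (Polynomial.natDegree_add_le _ _) (by simpa using hdeg), ?_⟩
  filter_upwards [hev] with y hy
  simp [hy]

/-- Composition with the piecewise polynomial activation. -/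
lemma PwPoly_comp {σ : ℝ → ℝ} {m : ℕ} {t : Fin m → ℝ} {pσ : Fin (m + 1) → Polynomial ℝ} {E : ℕ}
    (hσloc : ∀ v : ℝ, (∀ i, t i ≠ v) → ∃ j : Fin (m + 1), ∀ᶠ z in nhds v, σ z = (pσ j).eval z)
    (hE : ∀ j, (pσ j).natDegree ≤ E)
    {G : ℝ → ℝ} {N D : ℕ} (hG : PwPoly G N D) :
    PwPoly (fun τ => σ (G τ)) (N + (N + 1) * (m * D)) (E * D) := by
  classical
  obtain ⟨s, hs, hloc⟩ := hG
  set B : Set ℝ := {x | x ∉ s ∧ (∃ i, G x = t i) ∧ ¬(∀ᶠ y in nhds x, G y = G x)} with hB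
  -- interval bound on B
  have hIcc : ∀ a b : ℝ, a ≤ b → (∀ x ∈ Set.Icc a b, x ∉ s) →
      (B ∩ Set.Icc a b).Finite ∧ (B ∩ Set.Icc a b).ncard ≤ m * D := by
    intro a b hab hfree
    obtain ⟨a', b', ha', hb', hfree'⟩ := fatten s hfree
    have hIccIoo : Set.Icc a b ⊆ Set.Ioo a' b' := fun x hx => ⟨lt_of_lt_of_le ha' hx.1, lt_of_le_of_lt hx.2 hb'⟩
    obtain ⟨p, hdeg, heq⟩ := glue hloc isOpen_Ioo ((convex_Ioo a' b').isPreconnected) hfree'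
    by_cases hconst : p.natDegree = 0
    · obtain ⟨cc, rfl⟩ := Polynomial.natDegree_eq_zero.mp hconst
      have hBempty : B ∩ Set.Icc a b = ∅ := by
        rw [Set.eq_empty_iff_forall_notMem]
        rintro x ⟨hxB, hxI⟩
        have hxIoo : x ∈ Set.Ioo a' b' := hIccIoo hxI
        refine hxB.2.2 ?_
        filter_upwards [isOpen_Ioo.eventually_mem hxIoo] with y hy
        rw [heq y hy, heq x hxIoo]
        simp
      rw [hBempty]
      simp
    · set q : Polynomial ℝ := ∏ i : Fin m, (p - Polynomial.C (t i)) with hq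
      have hqne : q ≠ 0 := by
        refine Finset.prod_ne_zero_iff.mpr fun i _ => ?_
        intro hzero
        have : p = Polynomial.C (t i) := by
          have := sub_eq_zero.mp hzero
          exact this
        rw [this] at hconst
        simp at hconst
      have hsub : B ∩ Set.Icc a b ⊆ ↑q.roots.toFinset := by
        rintro x ⟨hxB, hxI⟩
        have hxIoo : x ∈ Set.Ioo a' b' := hIccIoo hxI
        obtain ⟨i, hi⟩ := hxB.2.1
        have hev : p.eval x = t i := by rw [← heq x hxIoo, hi]
        have : q.eval x = 0 := by
          rw [hq, Polynomial.eval_prod]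
          exact Finset.prod_eq_zero (Finset.mem_univ i) (by simp [hev])
        exact Finset.mem_coe.mpr (Multiset.mem_toFinset.mpr ((Polynomial.mem_roots hqne).mpr this))
      have hqdeg : q.natDegree ≤ m * D := by
        calc q.natDegree ≤ ∑ i : Fin m, (p - Polynomial.C (t i)).natDegree :=
          Polynomial.natDegree_prod_le _ _
        _ ≤ Finset.univ.card • D := Finset.sum_le_card_nsmul _ _ _ (fun i _ => by
            refine le_trans (Polynomial.natDegree_sub_le _ _) ?_
            simp [hdeg])
        _ = m * D := by simp [Finset.card_univ]
      have hfin : (B ∩ Set.Icc a b).Finite := (q.roots.toFinset.finite_toSet).subset hsub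
      refine ⟨hfin, ?_⟩
      calc (B ∩ Set.Icc a b).ncard ≤ (↑q.roots.toFinset : Set ℝ).ncard :=
        Set.ncard_le_ncard hsub (q.roots.toFinset.finite_toSet)
      _ = q.roots.toFinset.card := Set.ncard_coe_finset _
      _ ≤ Multiset.card q.roots := Multiset.toFinset_card_le _
      _ ≤ q.natDegree := Polynomial.card_roots' q
      _ ≤ m * D := hqdeg
  -- B is finite and globally small
  obtain ⟨hBfin, hBcard⟩ := count_lemma (fun x hx => hx.1) hIcc
  have hBcard' : hBfin.toFinset.card ≤ (N + 1) * (m * D) := by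
    rw [← Set.ncard_eq_toFinset_card _ hBfin]
    refine hBcard.trans ?_
    exact Nat.mul_le_mul_right _ (by omega)
  refine ⟨s ∪ hBfin.toFinset, ?_, ?_⟩
  · calc (s ∪ hBfin.toFinset).card ≤ s.card + hBfin.toFinset.card := Finset.card_union_le _ _
      _ ≤ N + (N + 1) * (m * D) := Nat.add_le_add hs hBcard'
  · intro x hx
    have hxs : x ∉ s := fun h => hx (Finset.mem_union_left _ h)
    have hxB : x ∉ B := fun h => hx (Finset.mem_union_right _ (hBfin.mem_toFinset.mpr h))
    obtain ⟨p, hdeg, hev⟩ := hloc x hxs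
    by_cases hti : ∃ i, G x = t i
    · -- then G is locally constant at x
      have hlc : ∀ᶠ y in nhds x, G y = G x := by
        by_contra hc
        exact hxB ⟨hxs, hti, hc⟩
      refine ⟨Polynomial.C (σ (G x)), by simp, ?_⟩
      filter_upwards [hlc] with y hy
      simp [hy]
    · push_neg at hti
      obtain ⟨j, hj⟩ := hσloc (G x) (fun i => fun hcon => hti i hcon.symm)
      have hGcont : ContinuousAt G x := by
        have hpc : ContinuousAt (fun y => p.eval y) x := (Polynomial.continuous p).continuousAt
        exact hpc.congr (by filter_upwards [hev] with y hy using hy.symm)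
      refine ⟨(pσ j).comp p, ?_, ?_⟩
      · calc ((pσ j).comp p).natDegree ≤ (pσ j).natDegree * p.natDegree := Polynomial.natDegree_comp_le
          _ ≤ E * D := Nat.mul_le_mul (hE j) hdeg
      · filter_upwards [hev, hGcont.tendsto.eventually hj] with y hy1 hy2
        rw [hy2, Polynomial.eval_comp, ← hy1]

/-- Core: a continuous piecewise polynomial function with `N` breakpoints and degree `D` cannot
alternate in sign at `N*(D+1) + D + 2` increasing points. -/
lemma no_alt_pos {G : ℝ → ℝ} (hGc : Continuous G) {N D : ℕ} (hD : 1 ≤ D)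
    (hPP : PwPoly G N D) {M : ℕ} (hM : M = N * (D + 1) + D + 2) {x : ℕ → ℝ}
    (hx : ∀ i j : ℕ, i < j → j < M → x i < x j)
    (halt : ∀ j, j < M → 0 < (-1 : ℝ) ^ j * G (x j)) : False := by
  classical
  obtain ⟨s, hs, hloc⟩ := hPP
  -- construct interlaced zeros
  have hz : ∀ j : ℕ, ∃ z : ℝ, j + 1 < M → (x j < z ∧ z < x (j + 1) ∧ G z = 0) := by
    intro j
    by_cases hj : j + 1 < M
    · have hcont : ContinuousOn G (Set.Icc (x j) (x (j + 1))) := hGc.continuousOn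
      have hxlt : x j ≤ x (j + 1) := le_of_lt (hx j (j + 1) (by omega) hj)
      rcases Nat.even_or_odd j with hpar | hpar
      · have h1 : 0 < G (x j) := by
          have := halt j (by omega); rwa [hpar.neg_one_pow, one_mul] at this
        have h2 : G (x (j + 1)) < 0 := by
          have := halt (j + 1) hj
          rw [Odd.neg_one_pow (by exact Even.add_one hpar)] at this
          linarith
        obtain ⟨z, hz1, hz2⟩ := intermediate_value_Ioo' hxlt hcont (Set.mem_Ioo.mpr ⟨h2, h1⟩)
        exact ⟨z, fun _ => ⟨hz1.1, hz1.2, hz2⟩⟩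
      · have h1 : G (x j) < 0 := by
          have := halt j (by omega)
          rw [hpar.neg_one_pow] at this
          linarith
        have h2 : 0 < G (x (j + 1)) := by
          have := halt (j + 1) hj
          rwa [Even.neg_one_pow (by simpa using hpar.add_one), one_mul] at this
        obtain ⟨z, hz1, hz2⟩ := intermediate_value_Ioo hxlt hcont (Set.mem_Ioo.mpr ⟨h1, h2⟩)
        exact ⟨z, fun _ => ⟨hz1.1, hz1.2, hz2⟩⟩
    · exact ⟨0, fun hc => absurd hc hj⟩
  choose z hzp using hz
  set M' : ℕ := M - 1 with hM'
  have hzx1 : ∀ j, j < M' → x j < z j := fun j hj => (hzp j (by omega)).1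
  have hzx2 : ∀ j, j < M' → z j < x (j + 1) := fun j hj => (hzp j (by omega)).2.1
  have hz0 : ∀ j, j < M' → G (z j) = 0 := fun j hj => (hzp j (by omega)).2.2
  have hzmono : ∀ i j, i < j → j < M' → z i < z j := by
    intro i j hij hj
    have h1 : z i < x (i + 1) := hzx2 i (by omega)
    have h2 : x (i + 1) ≤ x j := by
      rcases eq_or_lt_of_le (Nat.succ_le_of_lt hij) with he | hlt
      · exact le_of_eq (by rw [← he])
      · exact le_of_lt (hx (i + 1) j hlt (by omega))
    have h3 : x j < z j := hzx1 j hj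
    linarith
  -- pigeonhole: some window of D+1 zeros avoids s
  have hwin : ∃ i : ℕ, i + D < M' ∧ ∀ w ∈ s, w ∉ Set.Icc (z i) (z (i + D)) := by
    by_contra hc
    push_neg at hc
    have hpick : ∀ i : ℕ, ∃ w : ℝ, i + D < M' → (w ∈ s ∧ w ∈ Set.Icc (z i) (z (i + D))) := by
      intro i
      by_cases hi : i + D < M'
      · obtain ⟨w, hw1, hw2⟩ := hc i hi
        exact ⟨w, fun _ => ⟨hw1, hw2⟩⟩
      · exact ⟨0, fun h => absurd h hi⟩
    choose w hw using hpick
    have hbound : ∀ i, i ∈ Finset.range (M' - D) → i + D < M' := by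
      intro i hi
      have := Finset.mem_range.mp hi
      omega
    have hmaps : ∀ i ∈ Finset.range (M' - D), w i ∈ s := fun i hi => (hw i (hbound i hi)).1
    have hcard : s.card * (D + 1) < (Finset.range (M' - D)).card := by
      rw [Finset.card_range]
      have h1 : M' - D = N * (D + 1) + 1 := by omega
      have h2 : s.card * (D + 1) ≤ N * (D + 1) := Nat.mul_le_mul_right _ hs
      omega
    obtain ⟨y, _, hy⟩ := Finset.exists_lt_card_fiber_of_mul_lt_card_of_maps_to hmaps hcard
    set F := Finset.filter (fun i => w i = y) (Finset.range (M' - D)) with hF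
    have hFne : F.Nonempty := Finset.card_pos.mp (by omega)
    set i1 := F.min' hFne with hi1
    set i2 := F.max' hFne with hi2
    have hi1m : i1 ∈ F := F.min'_mem hFne
    have hi2m : i2 ∈ F := F.max'_mem hFne
    have hFsub : F ⊆ Finset.Icc i1 i2 := fun i hi =>
      Finset.mem_Icc.mpr ⟨F.min'_le _ hi, F.le_max' _ hi⟩
    have hcard2 : D + 2 ≤ i2 + 1 - i1 := by
      have := Finset.card_le_card hFsub
      rw [Nat.card_Icc] at this
      omega
    have hgap : i1 + D < i2 := by omega
    have hIcc1 := (hw i1 (hbound i1 (Finset.mem_filter.mp hi1m).1)).2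
    have hIcc2 := (hw i2 (hbound i2 (Finset.mem_filter.mp hi2m).1)).2
    have hy1 : w i1 = y := (Finset.mem_filter.mp hi1m).2
    have hy2 : w i2 = y := (Finset.mem_filter.mp hi2m).2
    have hA : y ≤ z (i1 + D) := hy1 ▸ hIcc1.2
    have hBB : z i2 ≤ y := hy2 ▸ hIcc2.1
    have hi2lt : i2 + D < M' := hbound i2 (Finset.mem_filter.mp hi2m).1
    have : z (i1 + D) < z i2 := hzmono _ _ hgap (by omega)
    linarith
  obtain ⟨i, hiD, hifree⟩ := hwin
  -- on an s-free window with D+1 zeros, G vanishes identically, contradiction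
  have hzle : z i ≤ z (i + D) := le_of_lt (hzmono i (i + D) (by omega) hiD)
  obtain ⟨a', b', ha', hb', hfree'⟩ := fatten s (fun w hw hws => hifree w hws hw)
  obtain ⟨p, hdeg, heq⟩ := glue hloc isOpen_Ioo ((convex_Ioo a' b').isPreconnected) hfree'
  have hzmem : ∀ a : ℕ, a ≤ D → z (i + a) ∈ Set.Ioo a' b' := by
    intro a ha
    have h1 : z i ≤ z (i + a) := by
      rcases Nat.eq_zero_or_pos a with rfl | hpos
      · simp
      · exact le_of_lt (hzmono i (i + a) (by omega) (by omega))
    have h2 : z (i + a) ≤ z (i + D) := by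
      rcases eq_or_lt_of_le ha with he | hlt
      · exact le_of_eq (by rw [he])
      · exact le_of_lt (hzmono (i + a) (i + D) (by omega) hiD)
    exact ⟨lt_of_lt_of_le ha' h1, lt_of_le_of_lt h2 hb'⟩
  have hp0 : p = 0 := by
    by_contra hp0
    set T : Finset ℝ := (Finset.range (D + 1)).image (fun a => z (i + a)) with hT
    have hTcard : T.card = D + 1 := by
      rw [hT, Finset.card_image_of_injOn, Finset.card_range]
      intro a ha b hb hab
      by_contra hne
      rcases Nat.lt_or_ge a b with h | h
      · exact absurd hab (ne_of_lt (hzmono (i + a) (i + b) (by omega)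
          (by have := Finset.mem_range.mp (Finset.mem_coe.mp hb); omega)))
      · have : b < a := by omega
        exact absurd hab.symm (ne_of_lt (hzmono (i + b) (i + a) (by omega)
          (by have := Finset.mem_range.mp (Finset.mem_coe.mp ha); omega)))
    have hTsub : T ⊆ p.roots.toFinset := by
      intro u hu
      obtain ⟨a, ha, rfl⟩ := Finset.mem_image.mp hu
      have ham : a ≤ D := by have := Finset.mem_range.mp ha; omega
      have hmem := hzmem a ham
      have : G (z (i + a)) = p.eval (z (i + a)) := heq _ hmem
      have hroot : p.eval (z (i + a)) = 0 := by
        rw [← this]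
        exact hz0 (i + a) (by omega)
      exact Multiset.mem_toFinset.mpr ((Polynomial.mem_roots hp0).mpr hroot)
    have : D + 1 ≤ D := by
      calc D + 1 = T.card := hTcard.symm
        _ ≤ p.roots.toFinset.card := Finset.card_le_card hTsub
        _ ≤ Multiset.card p.roots := Multiset.toFinset_card_le _
        _ ≤ p.natDegree := Polynomial.card_roots' p
        _ ≤ D := hdeg
    omega
  -- G vanishes at x (i+1), contradiction with strict sign
  have hxmem : x (i + 1) ∈ Set.Ioo a' b' := by
    have h1 : z i < x (i + 1) := hzx2 i (by omega)
    have h2 : x (i + 1) < z (i + 1) := hzx1 (i + 1) (by omega)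
    have h3 : z (i + 1) ≤ z (i + D) := by
      rcases eq_or_lt_of_le hD with he | hlt
      · exact le_of_eq (by rw [← he])
      · exact le_of_lt (hzmono (i + 1) (i + D) (by omega) hiD)
    have h4 : a' < z i := ha'
    have h5 : z (i + D) < b' := hb'
    exact ⟨by linarith, by linarith⟩
  have hGx : G (x (i + 1)) = 0 := by
    rw [heq _ hxmem, hp0]
    simp
  have hpos := halt (i + 1) (by omega)
  rw [hGx] at hpos
  simp at hpos

lemma no_alt {G : ℝ → ℝ} (hGc : Continuous G) {N D : ℕ} (hD : 1 ≤ D)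
    (hPP : PwPoly G N D) {M : ℕ} (hM : M = N * (D + 1) + D + 2) {x : ℕ → ℝ}
    (hx : ∀ i j : ℕ, i < j → j < M → x i < x j) {e : ℝ} (he : e = 1 ∨ e = -1)
    (halt : ∀ j, j < M → 0 < e * ((-1 : ℝ) ^ j * G (x j))) : False := by
  rcases he with rfl | rfl
  · exact no_alt_pos hGc hD hPP hM hx (fun j hj => by have := halt j hj; linarith)
  · refine no_alt_pos (G := fun τ => -(G τ)) (hGc.neg) hD hPP.neg hM hx fun j hj => ?_
    have := halt j hj
    have h2 : (0:ℝ) < (-1 : ℝ) ^ j * -(G (x j)) := by nlinarith [this]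
    exact h2

/-- Complexity bounds (breakpoints, degree) per hidden layer. -/
def layerC (m E n : ℕ) : ℕ → ℕ × ℕ
  | 0 => (m, E)
  | s + 1 =>
    let q := n * (layerC m E n s).1
    (q + (q + 1) * (m * (layerC m E n s).2), E * (layerC m E n s).2)

lemma layerC_mono {m E n : ℕ} (hn : 1 ≤ n) (hE : 1 ≤ E) {s s' : ℕ} (h : s ≤ s') :
    (layerC m E n s).1 ≤ (layerC m E n s').1 ∧ (layerC m E n s).2 ≤ (layerC m E n s').2 := by
  induction s' with
  | zero => simp [Nat.le_zero.mp h]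
  | succ s' ih =>
    rcases Nat.lt_or_ge s (s' + 1) with hlt | hge
    · have := ih (by omega)
      constructor
      · calc (layerC m E n s).1 ≤ (layerC m E n s').1 := this.1
          _ ≤ n * (layerC m E n s').1 := Nat.le_mul_of_pos_left _ hn
          _ ≤ (layerC m E n (s' + 1)).1 := by
              show _ ≤ n * (layerC m E n s').1 + (n * (layerC m E n s').1 + 1) * (m * (layerC m E n s').2)
              omega
      · calc (layerC m E n s).2 ≤ (layerC m E n s').2 := this.2
          _ ≤ E * (layerC m E n s').2 := Nat.le_mul_of_pos_left _ hE
          _ = (layerC m E n (s' + 1)).2 := rfl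
    · have : s = s' + 1 := by omega
      subst this
      exact ⟨le_refl _, le_refl _⟩

section Network

variable {σ : ℝ → ℝ} {m : ℕ} {t : Fin m → ℝ} {pσ : Fin (m + 1) → Polynomial ℝ} {E : ℕ}
  {d : ℕ} {u v : Fin d → ℝ}

lemma hidden_pwpoly (ht : StrictMono t)
    (hσloc : ∀ w : ℝ, (∀ i, t i ≠ w) → ∃ j : Fin (m + 1), ∀ᶠ z in nhds w, σ z = (pσ j).eval z)
    (hE : ∀ j, (pσ j).natDegree ≤ E) {n : ℕ} :
    ∀ s : ℕ, ∀ h ∈ Hidden σ d n s, ∀ i : Fin n,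
      PwPoly (fun τ => h (fun j => u j + τ * (v j - u j)) i) (layerC m E n s).1 (layerC m E n s).2 := by
  intro s
  induction s with
  | zero =>
    rintro h ⟨w, b, rfl⟩ i
    have hsum : ∀ τ : ℝ, (∑ j, w i j * (u j + τ * (v j - u j))) + b i =
        (∑ j, w i j * (v j - u j)) * τ + ((∑ j, w i j * u j) + b i) := by
      intro τ
      simp only [mul_add, Finset.sum_add_distrib]
      rw [show (∑ j, w i j * (τ * (v j - u j))) = τ * ∑ j, w i j * (v j - u j) by
        rw [Finset.mul_sum]; exact Finset.sum_congr rfl fun j _ => by ring]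
      ring
    have hbase := PwPoly_base (σ := σ) ht hσloc hE (∑ j, w i j * (v j - u j)) ((∑ j, w i j * u j) + b i)
    show PwPoly (fun τ => σ ((∑ j, w i j * (u j + τ * (v j - u j))) + b i)) _ _
    have heqf : (fun τ => σ ((∑ j, w i j * (u j + τ * (v j - u j))) + b i)) =
        (fun τ => σ ((∑ j, w i j * (v j - u j)) * τ + ((∑ j, w i j * u j) + b i))) :=
      funext fun τ => by rw [hsum τ]
    rw [heqf]
    exact hbase
  | succ s ih =>
    rintro h ⟨g, hg, a, β, rfl⟩ i
    have hinner : PwPoly (fun τ => (∑ j, a i j * g (fun j' => u j' + τ * (v j' - u j')) j) + β i)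
        (n * (layerC m E n s).1) (layerC m E n s).2 := by
      exact PwPoly_add_const (PwPoly_sum (fun j => ih g hg j)) (β i)
    have := PwPoly_comp hσloc hE hinner
    exact this

lemma tau_pwpoly (ht : StrictMono t)
    (hσloc : ∀ w : ℝ, (∀ i, t i ≠ w) → ∃ j : Fin (m + 1), ∀ᶠ z in nhds w, σ z = (pσ j).eval z)
    (hE : ∀ j, (pσ j).natDegree ≤ E) (hE1 : 1 ≤ E) {n r : ℕ} (hn : 1 ≤ n)
    {g : (Fin d → ℝ) → ℝ} (hg : g ∈ Tau σ r n d) :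
    PwPoly (fun τ => g (fun j => u j + τ * (v j - u j)))
      (n * (layerC m E n (r - 1)).1) (layerC m E n (r - 1)).2 := by
  obtain ⟨s, hsr, h, hh, c, rfl⟩ := hg
  have h1 : PwPoly (fun τ => ∑ i, c i * h (fun j => u j + τ * (v j - u j)) i)
      (n * (layerC m E n s).1) (layerC m E n s).2 :=
    PwPoly_sum (fun i => hidden_pwpoly ht hσloc hE s h hh i)
  have hmono := layerC_mono (m := m) hn hE1 (show s ≤ r - 1 by omega)
  exact h1.mono (Nat.mul_le_mul_left _ hmono.1) hmono.2

lemma hidden_cont (hσc : Continuous σ) {n : ℕ} :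
    ∀ s : ℕ, ∀ h ∈ Hidden σ d n s, ∀ i : Fin n, Continuous (fun x : Fin d → ℝ => h x i) := by
  intro s
  induction s with
  | zero =>
    rintro h ⟨w, b, rfl⟩ i
    exact hσc.comp ((continuous_finset_sum _ fun j _ =>
      continuous_const.mul (continuous_apply j)).add continuous_const)
  | succ s ih =>
    rintro h ⟨g, hg, a, β, rfl⟩ i
    exact hσc.comp ((continuous_finset_sum _ fun j _ =>
      continuous_const.mul (ih g hg j)).add continuous_const)

lemma tau_cont (hσc : Continuous σ) {n r : ℕ} {g : (Fin d → ℝ) → ℝ} (hg : g ∈ Tau σ r n d) :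
    Continuous g := by
  obtain ⟨s, hsr, h, hh, c, rfl⟩ := hg
  exact continuous_finset_sum _ fun i _ => continuous_const.mul (hidden_cont hσc s h hh i)

end Network


lemma build_amp {P : ℕ → ℝ} (hP0 : ∀ k, 0 ≤ P k)
    (hPt : Filter.Tendsto P Filter.atTop (nhds 0)) {δ : ℕ → ℝ} (hδ : ∀ k, 0 < δ k) :
    ∃ A : ℝ → ℝ, Continuous A ∧ A 0 = 0 ∧ (∀ τ, 0 ≤ A τ) ∧ ∀ k τ, δ k ≤ τ → P k ≤ A τ := by
  classical
  set g : ℕ → ℝ → ℝ := fun k τ => min (P k) (max 0 (P k * (τ / δ k))) with hg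
  have hgc : ∀ k, Continuous (g k) :=
    fun k => continuous_const.min (continuous_const.max (continuous_const.mul
      (continuous_id.div_const _)))
  have hg0 : ∀ k τ, 0 ≤ g k τ := fun k τ => le_min (hP0 k) (le_max_left _ _)
  have hgP : ∀ k τ, g k τ ≤ P k := fun k τ => min_le_left _ _
  -- global bound
  obtain ⟨K1, hK1⟩ := Filter.eventually_atTop.mp (hPt.eventually_lt_const (by norm_num : (0:ℝ) < 1))
  set C : ℝ := 1 + ∑ j ∈ Finset.range K1, P j with hC
  have hPC : ∀ k, P k ≤ C := by
    intro k
    have hsum : 0 ≤ ∑ j ∈ Finset.range K1, P j :=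
      Finset.sum_nonneg fun j _ => hP0 j
    rcases lt_or_ge k K1 with hk | hk
    · have := Finset.single_le_sum (f := P) (fun j _ => hP0 j) (Finset.mem_range.mpr hk)
      linarith
    · have := hK1 k hk
      linarith
  have hbdd : ∀ τ, BddAbove (Set.range fun k => g k τ) := by
    intro τ
    exact ⟨C, by rintro _ ⟨k, rfl⟩; exact (hgP k τ).trans (hPC k)⟩
  set A : ℝ → ℝ := fun τ => ⨆ k, g k τ with hA
  have hAg : ∀ k τ, g k τ ≤ A τ := fun k τ => le_ciSup (hbdd τ) k
  have hA0 : A 0 = 0 := by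
    have : ∀ k, g k 0 = 0 := fun k => by
      simp [hg, hP0 k, min_eq_right]
    simp only [hA, this, ciSup_const]
  have hApos : ∀ τ, 0 ≤ A τ := fun τ => (hg0 0 τ).trans (hAg 0 τ)
  -- partial maxima
  set AK : ℕ → ℝ → ℝ := fun K => Nat.rec (g 0) (fun k Ak => fun τ => max (Ak τ) (g (k + 1) τ)) K
    with hAK
  have hAKsucc : ∀ K τ, AK (K + 1) τ = max (AK K τ) (g (K + 1) τ) := fun K τ => rfl
  have hAKc : ∀ K, Continuous (AK K) := by
    intro K
    induction K with
    | zero => exact hgc 0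
    | succ K ih => exact ih.max (hgc (K + 1))
  have hAKle : ∀ K k τ, k ≤ K → g k τ ≤ AK K τ := by
    intro K
    induction K with
    | zero => intro k τ hk; interval_cases k; exact le_refl _
    | succ K ih =>
      intro k τ hk
      rcases Nat.lt_or_ge k (K + 1) with h | h
      · exact (ih k τ (by omega)).trans (le_max_left _ _)
      · have : k = K + 1 := by omega
        subst this
        exact le_max_right _ _
  have hAKA : ∀ K τ, AK K τ ≤ A τ := by
    intro K
    induction K with
    | zero => exact fun τ => hAg 0 τ
    | succ K ih => exact fun τ => max_le (ih τ) (hAg (K + 1) τ)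
  have hAK0 : ∀ K τ, 0 ≤ AK K τ := fun K τ => (hg0 0 τ).trans (hAKle K 0 τ (by omega))
  have hunif : TendstoUniformly (fun K τ => AK K τ) A Filter.atTop := by
    rw [Metric.tendstoUniformly_iff]
    intro η hη
    obtain ⟨K0, hK0⟩ := Filter.eventually_atTop.mp (hPt.eventually_lt_const (by linarith : (0:ℝ) < η / 2))
    rw [Filter.eventually_atTop]
    refine ⟨K0, fun K hK τ => ?_⟩
    have hup : A τ ≤ AK K τ + η / 2 := by
      refine ciSup_le fun k => ?_
      rcases le_or_gt k K with h | h
      · exact (hAKle K k τ h).trans (by linarith)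
      · have : P k < η / 2 := hK0 k (by omega)
        have := hgP k τ
        have := hAK0 K τ
        linarith
    have hlow : AK K τ ≤ A τ := hAKA K τ
    rw [Real.dist_eq, abs_lt]
    constructor <;> linarith
  exact ⟨A, hunif.continuous (Filter.Eventually.of_forall hAKc).frequently, hA0, hApos, by
    intro k τ hτ
    have hgk : g k τ = P k := by
      have h1 : (1:ℝ) ≤ τ / δ k := (one_le_div (hδ k)).mpr hτ
      have h2 : P k ≤ P k * (τ / δ k) := le_mul_of_one_le_right (hP0 k) h1
      have h3 : P k ≤ max 0 (P k * (τ / δ k)) := h2.trans (le_max_right _ _)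
      exact min_eq_left h3
    calc P k = g k τ := hgk.symm
      _ ≤ A τ := hAg k τ⟩

lemma build_F {A : ℝ → ℝ} (hAc : Continuous A) (hA0 : A 0 = 0) (hA : ∀ τ, 0 ≤ A τ) :
    Continuous (fun τ => A τ * Real.sin (Real.pi / τ)) := by
  rw [continuous_iff_continuousAt]
  intro τ0
  by_cases h0 : τ0 = 0
  · subst h0
    have hval : A 0 * Real.sin (Real.pi / 0) = 0 := by simp [hA0]
    rw [ContinuousAt, hval]
    have hbound : ∀ τ : ℝ, ‖A τ * Real.sin (Real.pi / τ)‖ ≤ A τ := by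
      intro τ
      rw [Real.norm_eq_abs, abs_mul, abs_of_nonneg (hA τ)]
      calc A τ * |Real.sin (Real.pi / τ)| ≤ A τ * 1 :=
        mul_le_mul_of_nonneg_left (abs_le.mpr ⟨Real.neg_one_le_sin _, Real.sin_le_one _⟩) (hA τ)
      _ = A τ := mul_one _
    have hAt : Filter.Tendsto A (nhds 0) (nhds 0) := by
      have := hAc.continuousAt (x := 0)
      rwa [ContinuousAt, hA0] at this
    exact squeeze_zero_norm hbound hAt
  · exact (hAc.continuousAt).mul ((Real.continuous_sin.continuousAt).comp
      ((continuousAt_const.div continuousAt_id h0)))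

lemma sin_peak (i : ℕ) : Real.sin (Real.pi / (2 / (2 * (i : ℝ) + 1))) = (-1) ^ i := by
  have hne : (2 : ℝ) * (i : ℝ) + 1 ≠ 0 := by positivity
  have harg : Real.pi / (2 / (2 * (i : ℝ) + 1)) = Real.pi / 2 + (i : ℝ) * Real.pi := by
    field_simp
    ring
  rw [harg, show Real.pi / 2 + (i : ℝ) * Real.pi = Real.pi / 2 + (i : ℕ) * Real.pi by norm_num,
    Real.sin_add_nat_mul_pi, Real.sin_pi_div_two, mul_one]

/-- Let `d ≥ 1`, let `K ⊂ ℝ^d` be compact and convex with at least two points,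
and let `σ` be continuous and piecewise polynomial with finitely many pieces. Then for arbitrary
sequences `(r_k)`, `(n_k)` of naturals and any null sequence `(ε_k)` there is a continuous
`f : K → ℝ` with `inf_{g ∈ τ_{r_k,n_k}^{σ,d}} sup_{x ∈ K} |f x - g x| ≥ ε_k` for all `k ≥ 1`. -/
theorem deep_negative_uniform_spline (d : ℕ) (hd : 1 ≤ d) (K : Set (Fin d → ℝ))
    (hK : IsCompact K) (hKconv : Convex ℝ K) (hK2 : ∃ x ∈ K, ∃ y ∈ K, x ≠ y)
    (σ : ℝ → ℝ) (hσc : Continuous σ) (hσ : IsPiecewisePoly σ)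
    (r n : ℕ → ℕ) (hr : ∀ k, 1 ≤ r k) (hn : ∀ k, 1 ≤ n k)
    (ε : ℕ → ℝ) (hε : Filter.Tendsto ε Filter.atTop (nhds 0)) :
    ∃ f : (Fin d → ℝ) → ℝ, ContinuousOn f K ∧
      ∀ k : ℕ, 1 ≤ k → ∀ g ∈ Tau σ (r k) (n k) d,
        ε k ≤ sSup ((fun x => |f x - g x|) '' K) := by
  classical
  obtain ⟨u, hu, v, hv, huv⟩ := hK2
  obtain ⟨m, t, ht, pσ, hpiece⟩ := hσ
  have hσloc := sigma_local (σ := σ) ht hpiece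
  set E : ℕ := max 1 (Finset.univ.sup fun j => (pσ j).natDegree) with hE
  have hEdeg : ∀ j, (pσ j).natDegree ≤ E := fun j => by
    rw [hE]
    exact le_trans (Finset.le_sup (f := fun j => (pσ j).natDegree) (Finset.mem_univ j))
      (le_max_right _ _)
  have hE1 : 1 ≤ E := le_max_left _ _
  -- the segment parametrization and its left inverse
  set ℓ : ℝ → (Fin d → ℝ) := fun τ => fun j => u j + τ * (v j - u j) with hℓ
  set S : ℝ := ∑ j, (v j - u j) ^ 2 with hSS
  have hSpos : 0 < S := by
    obtain ⟨j0, hj0⟩ := Function.ne_iff.mp huv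
    refine Finset.sum_pos' (fun j _ => sq_nonneg _) ⟨j0, Finset.mem_univ _, ?_⟩
    have : v j0 - u j0 ≠ 0 := sub_ne_zero.mpr (fun hc => hj0 hc.symm)
    positivity
  set φ : (Fin d → ℝ) → ℝ := fun x => (∑ j, (x j - u j) * (v j - u j)) / S with hφ
  have hφℓ : ∀ τ, φ (ℓ τ) = τ := by
    intro τ
    have hnum : (∑ j, (ℓ τ j - u j) * (v j - u j)) = τ * S := by
      rw [hSS, Finset.mul_sum]
      refine Finset.sum_congr rfl fun j _ => ?_
      simp only [hℓ]
      ring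
    rw [hφ]
    simp only [hnum]
    field_simp
  have hφc : Continuous φ :=
    (continuous_finset_sum _ fun j _ =>
      ((continuous_apply j).sub continuous_const).mul continuous_const).div_const _
  have hℓc : Continuous ℓ :=
    continuous_pi fun j => continuous_const.add (continuous_id.mul continuous_const)
  have hℓK : ∀ τ : ℝ, τ ∈ Set.Icc (0:ℝ) 1 → ℓ τ ∈ K := by
    intro τ hτ
    have hmem := hKconv hu hv (by linarith [hτ.2] : (0:ℝ) ≤ 1 - τ) hτ.1 (by ring)
    have : (1 - τ) • u + τ • v = ℓ τ := by
      funext j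
      simp only [Pi.add_apply, Pi.smul_apply, smul_eq_mul, hℓ]
      ring
    rwa [this] at hmem
  -- complexity data
  set Nk : ℕ → ℕ := fun k => n k * (layerC m E (n k) (r k - 1)).1 with hNk
  set Dk : ℕ → ℕ := fun k => max (layerC m E (n k) (r k - 1)).2 1 with hDk
  set Mk : ℕ → ℕ := fun k => Nk k * (Dk k + 1) + Dk k + 2 with hMk
  set δ : ℕ → ℝ := fun k => 2 / (2 * (Mk k : ℝ) + 3) with hδdef
  have hδpos : ∀ k, 0 < δ k := fun k => by rw [hδdef]; positivity
  set P : ℕ → ℝ := fun k => max (ε k) 0 with hP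
  have hP0 : ∀ k, 0 ≤ P k := fun k => le_max_right _ _
  have hPt : Filter.Tendsto P Filter.atTop (nhds 0) := by
    have := hε.max (tendsto_const_nhds (x := (0:ℝ)))
    simpa using this
  obtain ⟨A, hAc, hA0, hApos, hAamp⟩ := build_amp hP0 hPt hδpos
  set F : ℝ → ℝ := fun τ => A τ * Real.sin (Real.pi / τ) with hF
  have hFc : Continuous F := build_F hAc hA0 hApos
  refine ⟨fun x => F (φ x), (hFc.comp hφc).continuousOn, ?_⟩
  intro k hk g hg
  set G : ℝ → ℝ := fun τ => g (ℓ τ) with hG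
  have hgc : Continuous g := tau_cont hσc hg
  have habs : ContinuousOn (fun x => |(fun x => F (φ x)) x - g x|) K :=
    (((hFc.comp hφc).sub hgc).abs).continuousOn
  have hbdd : BddAbove ((fun x => |F (φ x) - g x|) '' K) :=
    (hK.image_of_continuousOn habs).bddAbove
  have hle : ∀ x ∈ K, |F (φ x) - g x| ≤ sSup ((fun x => |F (φ x) - g x|) '' K) :=
    fun x hx => le_csSup hbdd ⟨x, hx, rfl⟩
  rcases le_or_gt (ε k) 0 with hneg | hpos
  · calc ε k ≤ 0 := hneg
      _ ≤ |F (φ u) - g u| := abs_nonneg _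
      _ ≤ _ := hle u hu
  by_contra hcon
  push_neg at hcon
  -- alternation points
  set x : ℕ → ℝ := fun j => 2 / (2 * ((Mk k - j : ℕ) : ℝ) + 1) with hx
  have hxpos : ∀ j, 0 < x j := fun j => by rw [hx]; positivity
  have hxmono : ∀ i j : ℕ, i < j → j < Mk k → x i < x j := by
    intro i j hij hj
    rw [hx]
    have hij' : (Mk k - j : ℕ) < (Mk k - i : ℕ) := by omega
    have : (2 : ℝ) * ((Mk k - j : ℕ) : ℝ) + 1 < 2 * ((Mk k - i : ℕ) : ℝ) + 1 := by
      have : ((Mk k - j : ℕ) : ℝ) < ((Mk k - i : ℕ) : ℝ) := by exact_mod_cast hij'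
      linarith
    exact div_lt_div_of_pos_left (by norm_num) (by positivity) this
  have hxle1 : ∀ j, j < Mk k → x j ≤ 1 := by
    intro j hj
    rw [hx, div_le_one (by positivity)]
    have h1 : (1 : ℕ) ≤ Mk k - j := by omega
    have : (1 : ℝ) ≤ ((Mk k - j : ℕ) : ℝ) := by exact_mod_cast h1
    linarith
  have hδx : ∀ j, j < Mk k → δ k ≤ x j := by
    intro j hj
    rw [hx, hδdef]
    refine div_le_div_of_nonneg_left (by norm_num) (by positivity) ?_
    have : ((Mk k - j : ℕ) : ℝ) ≤ (Mk k : ℝ) := by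
      exact_mod_cast Nat.sub_le _ _
    linarith
  have hxK : ∀ j, j < Mk k → ℓ (x j) ∈ K :=
    fun j hj => hℓK (x j) ⟨le_of_lt (hxpos j), hxle1 j hj⟩
  -- value of F at the alternation points
  have hFval : ∀ j, F (x j) = A (x j) * (-1 : ℝ) ^ (Mk k - j : ℕ) := by
    intro j
    simp only [hF, hx]
    rw [sin_peak (Mk k - j)]
  have hAx : ∀ j, j < Mk k → ε k ≤ A (x j) := by
    intro j hj
    calc ε k ≤ P k := le_max_left _ _
      _ ≤ A (x j) := hAamp k (x j) (hδx j hj)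
  -- sign bookkeeping
  set e : ℝ := (-1 : ℝ) ^ (Mk k) with he'
  have he : e = 1 ∨ e = -1 := by
    rcases Nat.even_or_odd (Mk k) with hp | hp
    · exact Or.inl (hp.neg_one_pow)
    · exact Or.inr (hp.neg_one_pow)
  have hsign : ∀ j, j ≤ Mk k → e * ((-1 : ℝ) ^ j * (-1 : ℝ) ^ (Mk k - j : ℕ)) = 1 := by
    intro j hj
    rw [he', ← pow_add, ← pow_add]
    have : Mk k + (j + (Mk k - j)) = 2 * Mk k := by omega
    rw [this, pow_mul]
    norm_num
  -- alternation of G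
  have halt : ∀ j, j < Mk k → 0 < e * ((-1 : ℝ) ^ j * G (x j)) := by
    intro j hj
    have hdist : |F (x j) - G (x j)| < ε k := by
      have h1 : |F (φ (ℓ (x j))) - g (ℓ (x j))| ≤ sSup ((fun x => |F (φ x) - g x|) '' K) :=
        hle _ (hxK j hj)
      rw [hφℓ] at h1
      exact lt_of_le_of_lt h1 hcon
    have hcF : e * ((-1 : ℝ) ^ j * F (x j)) = A (x j) := by
      rw [hFval j]
      have := hsign j (by omega)
      calc e * ((-1:ℝ)^j * (A (x j) * (-1:ℝ)^(Mk k - j : ℕ)))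
          = A (x j) * (e * ((-1:ℝ)^j * (-1:ℝ)^(Mk k - j : ℕ))) := by ring
        _ = A (x j) := by rw [this, mul_one]
    have hεA : ε k ≤ A (x j) := hAx j hj
    obtain ⟨hd1, hd2⟩ := abs_lt.mp hdist
    rcases he with he1 | he1 <;> rcases Nat.even_or_odd j with hp | hp <;>
      rw [he1] at hcF ⊢ <;> rw [hp.neg_one_pow] at hcF ⊢ <;> nlinarith
  -- contradiction via the counting lemma
  have hPP : PwPoly G (Nk k) (Dk k) := by
    have := tau_pwpoly (u := u) (v := v) ht hσloc hEdeg hE1 (hn k) hg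
    exact this.mono (le_refl _) (le_max_left _ _)
  exact no_alt (hgc.comp hℓc) (le_max_right _ _) hPP rfl hxmono he halt
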